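/- The vector |χ₁(x)⟩ = (x a⁺; p)_∞^{-1}|0⟩ satisfies (a⁻ - x(1 + p^{1/2} k)) |χ₁(x)⟩ = 0. -/
import Mathlib

noncomputable def aMinus (p : ℝ) (v : ℕ → ℂ) : ℕ → ℂ := fun m =>
  ((Real.sqrt (1 - p ^ (2 * m + 2)) : ℝ) : ℂ) * v (m + 1)

noncomputable def kOp (p : ℝ) (v : ℕ → ℂ) : ℕ → ℂ := fun m =>
  ((p : ℂ) ^ m * ((Real.sqrt p : ℝ) : ℂ)) * v m

noncomputable def qPoch (a q : ℝ) (m : ℕ) : ℝ := ∏ i ∈ Finset.range m, (1 - a * q ^ i)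

/-- `|χ₁(x)⟩ = (x a⁺; p)_∞^{-1}|0⟩ = Σ_j x^j (a⁺)^j/(p;p)_j |0⟩`. -/
noncomputable def chi1 (p x : ℝ) : ℕ → ℂ := fun m =>
  (x : ℂ) ^ m * ((Real.sqrt (qPoch (p ^ 2) (p ^ 2) m) : ℝ) : ℂ) / ((qPoch p p m : ℝ) : ℂ)

lemma qPoch_succ (a q : ℝ) (m : ℕ) :
    qPoch a q (m + 1) = qPoch a q m * (1 - a * q ^ m) := by
  simp [qPoch, Finset.prod_range_succ]

lemma qPoch_pos {a q : ℝ} (ha : 0 ≤ a) (hq : 0 ≤ q) (hlt : a * 1 < 1) (hq1 : q ≤ 1) (m : ℕ) :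
    0 < qPoch a q m := by
  apply Finset.prod_pos
  intro i _
  have h1 : q ^ i ≤ 1 := pow_le_one₀ hq hq1
  nlinarith [mul_le_mul_of_nonneg_left h1 ha]

/-- `(a⁻ - x(1 + p^{1/2} k)) |χ₁(x)⟩ = 0`. -/
theorem chi1_aMinus_eq (p x : ℝ) (hp : 0 < p) (hp1 : p < 1) :
    aMinus p (chi1 p x) - (x : ℂ) •
      (chi1 p x + ((Real.sqrt p : ℝ) : ℂ) • kOp p (chi1 p x)) = 0 := by
  funext m
  have hA : 0 < qPoch p p m := qPoch_pos hp.le hp.le (by linarith) hp1.le m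
  have hB : 0 < qPoch (p ^ 2) (p ^ 2) m :=
    qPoch_pos (by positivity) (by positivity) (by nlinarith) (by nlinarith) m
  have hfac : (0:ℝ) < 1 - p ^ 2 * (p ^ 2) ^ m := by
    have : (p ^ 2) ^ m ≤ 1 := pow_le_one₀ (by positivity) (by nlinarith)
    nlinarith
  have hexp : p ^ (2 * m + 2) = p ^ 2 * (p ^ 2) ^ m := by
    rw [← pow_mul, ← pow_add]; ring_nf
  have hsqB : Real.sqrt (qPoch (p ^ 2) (p ^ 2) (m + 1))
      = Real.sqrt (qPoch (p ^ 2) (p ^ 2) m) * Real.sqrt (1 - p ^ 2 * (p ^ 2) ^ m) := by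
    rw [qPoch_succ, Real.sqrt_mul hB.le]
  have ht : Real.sqrt (1 - p ^ 2 * (p ^ 2) ^ m) * Real.sqrt (1 - p ^ 2 * (p ^ 2) ^ m)
      = 1 - p ^ 2 * (p ^ 2) ^ m := Real.mul_self_sqrt hfac.le
  have hu : Real.sqrt p * Real.sqrt p = p := Real.mul_self_sqrt hp.le
  have hAne : ((qPoch p p m : ℝ) : ℂ) ≠ 0 := by exact_mod_cast hA.ne'
  have hA1ne : ((qPoch p p (m+1) : ℝ) : ℂ) ≠ 0 := by
    exact_mod_cast (qPoch_pos hp.le hp.le (by linarith) hp1.le (m+1)).ne'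
  have hfacne : (1 : ℂ) - (p:ℂ) ^ (m+1) ≠ 0 := by
    have h1 : p ^ (m+1) < 1 := pow_lt_one₀ hp.le hp1 (Nat.succ_ne_zero m)
    have h2 : (1 - p ^ (m+1) : ℝ) ≠ 0 := by linarith
    exact_mod_cast h2
  simp only [aMinus, kOp, chi1, Pi.sub_apply, Pi.smul_apply, Pi.add_apply, Pi.zero_apply,
    smul_eq_mul, hexp, hsqB]
  rw [qPoch_succ p p m]
  push_cast
  have hmne : (1:ℂ) - (p:ℂ) * (p:ℂ) ^ m ≠ 0 := by
    have : (1:ℂ) - (p:ℂ) * (p:ℂ) ^ m = 1 - (p:ℂ) ^ (m+1) := by ring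
    rw [this]; exact hfacne
  have htC : ((Real.sqrt (1 - p ^ 2 * (p ^ 2) ^ m) : ℝ) : ℂ) ^ 2
      = 1 - (p:ℂ) ^ 2 * ((p:ℂ) ^ 2) ^ m := by
    rw [sq]; exact_mod_cast congrArg (fun r : ℝ => (r : ℂ)) ht
  have huC : ((Real.sqrt p : ℝ) : ℂ) ^ 2 = (p:ℂ) := by
    rw [sq]; exact_mod_cast congrArg (fun r : ℝ => (r : ℂ)) hu
  rw [sub_eq_zero]
  field_simp
  ring_nf
  have harg : (1:ℝ) - p ^ 2 * p ^ (m * 2) = 1 - p ^ 2 * (p ^ 2) ^ m := by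
    rw [mul_comm m 2, pow_mul]
  have htC' : ((Real.sqrt (1 - p ^ 2 * p ^ (m * 2)) : ℝ) : ℂ) ^ 2
      = 1 - (p:ℂ) ^ 2 * (p:ℂ) ^ (m * 2) := by
    rw [harg, htC, ← pow_mul, mul_comm 2 m]
  rw [htC', huC]
  ring
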